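/- arXiv:1010.4425 — 2 statements merged into one kernel-verified Lean document; each statement's English description precedes it below -/
import Mathlib

section
/- Let m ≥ 2 be an integer and ω ∈ (0, m−1] irrational, with continuants pₙ, qₙ and digit sum Sₙ = b₁+⋯+bₙ from the m-adic continued fraction algorithm. Then for all n ≥ 1, |ω − pₙ/qₙ| ≤ m^{Sₙ}/(qₙ·qₙ₊₁) ≤ 1/qₙ. -/
/-!
Write `aₖ = m ^ bₖ` and `xₙ = τₘⁿ(ω)`. The definition of `τₘ` says exactly that
`xₙ = 1 / (aₙ₊₁ (1 + xₙ₊₁))`, so `ω` is the value of the continued fraction whose convergents are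
`pₙ / qₙ`, with `xₙ₊₁` as the exact tail:
`ω = (pₙ₊₁ + aₙ₊₁ pₙ xₙ₊₁) / (qₙ₊₁ + aₙ₊₁ qₙ xₙ₊₁)`.
Together with the determinant identity `pₙ₊₁ qₙ - pₙ qₙ₊₁ = (-1)ⁿ a₁ ⋯ aₙ` this gives the error
`|ω - pₙ₊₁ / qₙ₊₁| = xₙ₊₁ a₁ ⋯ aₙ₊₁ / (qₙ₊₁ (qₙ₊₁ + aₙ₊₁ qₙ xₙ₊₁))`, and `aₙ₊₂ xₙ₊₁ ≤ 1` bounds the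
last factor from below by `xₙ₊₁ qₙ₊₂`. The second inequality is `a₁ ⋯ aₙ₊₁ ≤ aₙ₊₁ qₙ ≤ qₙ₊₂`.
-/

noncomputable def b1 (m : ℕ) (x : ℝ) : ℤ := ⌊Real.log x⁻¹ / Real.log m⌋

noncomputable def tau (m : ℕ) (x : ℝ) : ℝ :=
  (m : ℝ) ^ (Real.log x⁻¹ / Real.log m - (b1 m x : ℝ)) - 1

noncomputable def digit (m : ℕ) (ω : ℝ) (n : ℕ) : ℤ := b1 m ((tau m)^[n - 1] ω)

open Finset

lemma zpow_sum_eq_prod {ι : Type*} (s : Finset ι) (f : ι → ℤ) {y : ℝ} (hy : y ≠ 0) :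
    y ^ (∑ i ∈ s, f i) = ∏ i ∈ s, y ^ f i := by
  induction s using Finset.cons_induction with
  | empty => simp
  | cons i s hi ih => rw [sum_cons, prod_cons, zpow_add₀ hy, ih]

section Continuants

variable {a p q x : ℕ → ℝ}

theorem continuant_det (hp0 : p 0 = 0) (hq0 : q 0 = 1) (hp1 : p 1 = 1)
    (hp : ∀ n, p (n + 2) = a (n + 2) * p (n + 1) + a (n + 1) * p n)
    (hq : ∀ n, q (n + 2) = a (n + 2) * q (n + 1) + a (n + 1) * q n) (n : ℕ) :
    p (n + 1) * q n - p n * q (n + 1) = (-1) ^ n * ∏ k ∈ Icc 1 n, a k := by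
  induction n with
  | zero => simp [hp0, hq0, hp1]
  | succ n ih =>
    rw [hp, hq, prod_Icc_succ_top (by omega)]
    linear_combination (-a (n + 1)) * ih

theorem prod_le_continuant (ha : ∀ n, 0 < a n) (hq0 : q 0 = 1) (hq1 : q 1 = a 1)
    (hq : ∀ n, q (n + 2) = a (n + 2) * q (n + 1) + a (n + 1) * q n) (n : ℕ) :
    ∏ k ∈ Icc 1 n, a k ≤ q n := by
  induction n using Nat.twoStepInduction with
  | zero => simp [hq0]
  | one => simp [hq1]
  | more n ih₀ ih₁ =>
    have hqn : 0 ≤ q n := (prod_pos fun k _ => ha k).le.trans ih₀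
    rw [prod_Icc_succ_top (by omega), hq]
    nlinarith [ha (n + 1), ha (n + 2)]

theorem continuant_pos (ha : ∀ n, 0 < a n) (hq0 : q 0 = 1) (hq1 : q 1 = a 1)
    (hq : ∀ n, q (n + 2) = a (n + 2) * q (n + 1) + a (n + 1) * q n) (n : ℕ) : 0 < q n :=
  (prod_pos fun k _ => ha k).trans_le (prod_le_continuant ha hq0 hq1 hq n)

theorem prod_le_continuant_add_two (ha : ∀ n, 0 < a n) (hq0 : q 0 = 1) (hq1 : q 1 = a 1)
    (hq : ∀ n, q (n + 2) = a (n + 2) * q (n + 1) + a (n + 1) * q n) (n : ℕ) :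
    ∏ k ∈ Icc 1 (n + 1), a k ≤ q (n + 2) := by
  have h₀ := prod_le_continuant ha hq0 hq1 hq n
  have h₁ := continuant_pos ha hq0 hq1 hq (n + 1)
  rw [prod_Icc_succ_top (by omega), hq]
  nlinarith [ha (n + 1), ha (n + 2)]

theorem prod_div_continuant_mul_le (ha : ∀ n, 0 < a n) (hq0 : q 0 = 1) (hq1 : q 1 = a 1)
    (hq : ∀ n, q (n + 2) = a (n + 2) * q (n + 1) + a (n + 1) * q n) (n : ℕ) :
    (∏ k ∈ Icc 1 (n + 1), a k) / (q (n + 1) * q (n + 2)) ≤ 1 / q (n + 1) := by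
  have h₁ := continuant_pos ha hq0 hq1 hq (n + 1)
  have h₂ := continuant_pos ha hq0 hq1 hq (n + 2)
  rw [div_le_div_iff₀ (by positivity) h₁]
  nlinarith [prod_le_continuant_add_two ha hq0 hq1 hq n]

theorem head_mul_complete_continuant (hp0 : p 0 = 0) (hq0 : q 0 = 1) (hp1 : p 1 = 1)
    (hq1 : q 1 = a 1) (hp : ∀ n, p (n + 2) = a (n + 2) * p (n + 1) + a (n + 1) * p n)
    (hq : ∀ n, q (n + 2) = a (n + 2) * q (n + 1) + a (n + 1) * q n)
    (hx : ∀ n, a (n + 1) * x n * (x (n + 1) + 1) = 1) (n : ℕ) :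
    x 0 * (q (n + 1) + a (n + 1) * q n * x (n + 1)) = p (n + 1) + a (n + 1) * p n * x (n + 1) := by
  induction n with
  | zero =>
    rw [hp0, hq0, hp1, hq1]
    linear_combination hx 0
  | succ n ih =>
    rw [hp, hq]
    linear_combination (a (n + 2) * (x (n + 2) + 1)) * ih +
      (a (n + 1) * p n - x 0 * (a (n + 1) * q n)) * hx (n + 1)

theorem abs_sub_convergent_eq (ha : ∀ n, 0 < a n) (hxpos : ∀ n, 0 < x n) (hp0 : p 0 = 0)
    (hq0 : q 0 = 1) (hp1 : p 1 = 1) (hq1 : q 1 = a 1)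
    (hp : ∀ n, p (n + 2) = a (n + 2) * p (n + 1) + a (n + 1) * p n)
    (hq : ∀ n, q (n + 2) = a (n + 2) * q (n + 1) + a (n + 1) * q n)
    (hx : ∀ n, a (n + 1) * x n * (x (n + 1) + 1) = 1) (n : ℕ) :
    |x 0 - p (n + 1) / q (n + 1)| = x (n + 1) * (∏ k ∈ Icc 1 (n + 1), a k) /
      (q (n + 1) * (q (n + 1) + a (n + 1) * q n * x (n + 1))) := by
  have hqn := continuant_pos ha hq0 hq1 hq n
  have hqn₁ := continuant_pos ha hq0 hq1 hq (n + 1)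
  have hA : 0 < q (n + 1) + a (n + 1) * q n * x (n + 1) := by
    have := ha (n + 1); have := hxpos (n + 1); positivity
  have hexact := head_mul_complete_continuant hp0 hq0 hp1 hq1 hp hq hx n
  have hdet := continuant_det hp0 hq0 hp1 hp hq n
  have herr : x 0 - p (n + 1) / q (n + 1) = (-1) ^ (n + 1) * (x (n + 1) *
      ∏ k ∈ Icc 1 (n + 1), a k) / (q (n + 1) * (q (n + 1) + a (n + 1) * q n * x (n + 1))) := by
    refine eq_div_of_mul_eq (by positivity) ?_
    rw [prod_Icc_succ_top (by omega)]
    linear_combination q (n + 1) * hexact - a (n + 1) * x (n + 1) * hdet -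
      (q (n + 1) + a (n + 1) * q n * x (n + 1)) * div_mul_cancel₀ (p (n + 1)) hqn₁.ne'
  rw [herr, mul_div_assoc, abs_mul, abs_neg_one_pow, one_mul, abs_of_pos]
  have := hxpos (n + 1)
  have := prod_pos fun k (_ : k ∈ Icc 1 (n + 1)) => ha k
  positivity

theorem abs_sub_convergent_le (ha : ∀ n, 0 < a n) (hxpos : ∀ n, 0 < x n) (hp0 : p 0 = 0)
    (hq0 : q 0 = 1) (hp1 : p 1 = 1) (hq1 : q 1 = a 1)
    (hp : ∀ n, p (n + 2) = a (n + 2) * p (n + 1) + a (n + 1) * p n)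
    (hq : ∀ n, q (n + 2) = a (n + 2) * q (n + 1) + a (n + 1) * q n)
    (hx : ∀ n, a (n + 1) * x n * (x (n + 1) + 1) = 1) (n : ℕ) :
    |x 0 - p (n + 1) / q (n + 1)| ≤ (∏ k ∈ Icc 1 (n + 1), a k) / (q (n + 1) * q (n + 2)) := by
  have hqn := continuant_pos ha hq0 hq1 hq n
  have hqn₁ := continuant_pos ha hq0 hq1 hq (n + 1)
  have hqn₂ := continuant_pos ha hq0 hq1 hq (n + 2)
  have hprod := prod_pos fun k (_ : k ∈ Icc 1 (n + 1)) => ha k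
  have hx₁ := hxpos (n + 1)
  have hdigit : a (n + 2) * x (n + 1) ≤ 1 := by nlinarith [hx (n + 1), hxpos (n + 2), ha (n + 2)]
  have hden : x (n + 1) * q (n + 2) ≤ q (n + 1) + a (n + 1) * q n * x (n + 1) := by
    rw [hq]
    nlinarith
  rw [abs_sub_convergent_eq ha hxpos hp0 hq0 hp1 hq1 hp hq hx n,
    div_le_div_iff₀ (by have := ha (n + 1); positivity) (by positivity)]
  calc x (n + 1) * (∏ k ∈ Icc 1 (n + 1), a k) * (q (n + 1) * q (n + 2))
      = (∏ k ∈ Icc 1 (n + 1), a k) * (q (n + 1) * (x (n + 1) * q (n + 2))) := by ring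
    _ ≤ (∏ k ∈ Icc 1 (n + 1), a k) * (q (n + 1) * (q (n + 1) + a (n + 1) * q n * x (n + 1))) := by
      gcongr

end Continuants

section Tau

variable {m : ℕ} {x : ℝ}

lemma zpow_b1_mul_le_one (hm : 1 < m) (hx : 0 < x) : (m : ℝ) ^ b1 m x * x ≤ 1 := by
  have hm' : (1 : ℝ) < m := by exact_mod_cast hm
  have hle : (m : ℝ) ^ b1 m x ≤ x⁻¹ :=
    calc (m : ℝ) ^ b1 m x = (m : ℝ) ^ (b1 m x : ℝ) := (Real.rpow_intCast _ _).symm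
      _ ≤ (m : ℝ) ^ Real.logb m x⁻¹ := Real.rpow_le_rpow_of_exponent_le hm'.le (Int.floor_le _)
      _ = x⁻¹ := Real.rpow_logb (by positivity) hm'.ne' (inv_pos.mpr hx)
  calc (m : ℝ) ^ b1 m x * x ≤ x⁻¹ * x := by gcongr
    _ = 1 := inv_mul_cancel₀ hx.ne'

lemma zpow_b1_mul_mul_tau_add_one (hm : 1 < m) (hx : 0 < x) :
    (m : ℝ) ^ b1 m x * x * (tau m x + 1) = 1 := by
  have hm' : (1 : ℝ) < m := by exact_mod_cast hm
  have hpow : (m : ℝ) ^ Real.logb m x⁻¹ = x⁻¹ :=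
    Real.rpow_logb (by positivity) hm'.ne' (inv_pos.mpr hx)
  rw [tau, sub_add_cancel, ← Real.logb, Real.rpow_sub (by positivity), hpow, Real.rpow_intCast]
  field_simp

lemma Irrational.zpow_b1_mul (hm : 1 < m) (hx : Irrational x) :
    Irrational ((m : ℝ) ^ b1 m x * x) := by
  have h := hx.ratCast_mul (q := (m : ℚ) ^ b1 m x) (by positivity)
  push_cast at h
  exact h

lemma tau_pos (hm : 1 < m) (hx : 0 < x) (hirr : Irrational x) : 0 < tau m x := by
  have hlt : (m : ℝ) ^ b1 m x * x < 1 :=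
    (zpow_b1_mul_le_one hm hx).lt_of_ne (hirr.zpow_b1_mul hm).ne_one
  have hpos : 0 < (m : ℝ) ^ b1 m x * x := by positivity
  nlinarith [zpow_b1_mul_mul_tau_add_one hm hx]

lemma irrational_tau (hm : 1 < m) (hx : 0 < x) (hirr : Irrational x) : Irrational (tau m x) := by
  have h : tau m x = ((m : ℝ) ^ b1 m x * x)⁻¹ - (1 : ℕ) := by
    rw [← eq_inv_of_mul_eq_one_right (zpow_b1_mul_mul_tau_add_one hm hx)]
    simp
  rw [h]
  exact (hirr.zpow_b1_mul hm).inv.sub_natCast 1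

lemma iterate_tau_pos_and_irrational (hm : 1 < m) (hx : 0 < x) (hirr : Irrational x) (n : ℕ) :
    0 < (tau m)^[n] x ∧ Irrational ((tau m)^[n] x) := by
  induction n with
  | zero => exact ⟨hx, hirr⟩
  | succ n ih =>
    rw [Function.iterate_succ_apply']
    exact ⟨tau_pos hm ih.1 ih.2, irrational_tau hm ih.1 ih.2⟩

end Tau

theorem abs_error_upper_bound_general (m : ℕ) (hm : 2 ≤ m) (ω : ℝ) (hω : Irrational ω) (hω0 : 0 < ω)
    (p q : ℕ → ℝ)
    (hp0 : p 0 = 0) (hq0 : q 0 = 1) (hp1 : p 1 = 1) (hq1 : q 1 = (m : ℝ) ^ (digit m ω 1))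
    (hp : ∀ n, 2 ≤ n → p n = (m : ℝ) ^ (digit m ω n) * p (n - 1) + (m : ℝ) ^ (digit m ω (n - 1)) * p (n - 2))
    (hq : ∀ n, 2 ≤ n → q n = (m : ℝ) ^ (digit m ω n) * q (n - 1) + (m : ℝ) ^ (digit m ω (n - 1)) * q (n - 2)) :
    ∀ n, 1 ≤ n →
      |ω - p n / q n| ≤ (m : ℝ) ^ (∑ k ∈ Finset.Icc 1 n, digit m ω k) / (q n * q (n + 1)) ∧
      (m : ℝ) ^ (∑ k ∈ Finset.Icc 1 n, digit m ω k) / (q n * q (n + 1)) ≤ 1 / q n := by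
  have hm₁ : 1 < m := by omega
  set a : ℕ → ℝ := fun k => (m : ℝ) ^ digit m ω k
  have ha : ∀ k, 0 < a k := fun k => by positivity
  have horbit := iterate_tau_pos_and_irrational hm₁ hω0 hω
  have hx : ∀ n, a (n + 1) * (tau m)^[n] ω * ((tau m)^[n + 1] ω + 1) = 1 := fun n => by
    rw [Function.iterate_succ_apply']
    exact zpow_b1_mul_mul_tau_add_one hm₁ (horbit n).1
  have hp' : ∀ n, p (n + 2) = a (n + 2) * p (n + 1) + a (n + 1) * p n :=
    fun n => hp (n + 2) (by omega)
  have hq' : ∀ n, q (n + 2) = a (n + 2) * q (n + 1) + a (n + 1) * q n :=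
    fun n => hq (n + 2) (by omega)
  intro _ hn
  obtain ⟨n, rfl⟩ := Nat.exists_eq_add_of_le' hn
  rw [zpow_sum_eq_prod _ _ (by positivity)]
  exact ⟨abs_sub_convergent_le ha (fun n => (horbit n).1) hp0 hq0 hp1 hq1 hp' hq' hx n,
    prod_div_continuant_mul_le ha hq0 hq1 hq' n⟩

theorem abs_error_upper_bound (m : ℕ) (hm : 2 ≤ m) (ω : ℝ) (hω : Irrational ω) (hω0 : 0 < ω) (hω1 : ω ≤ (m : ℝ) - 1)
    (p q : ℕ → ℝ)
    (hp0 : p 0 = 0) (hq0 : q 0 = 1) (hp1 : p 1 = 1) (hq1 : q 1 = (m : ℝ) ^ (digit m ω 1))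
    (hp : ∀ n, 2 ≤ n → p n = (m : ℝ) ^ (digit m ω n) * p (n - 1) + (m : ℝ) ^ (digit m ω (n - 1)) * p (n - 2))
    (hq : ∀ n, 2 ≤ n → q n = (m : ℝ) ^ (digit m ω n) * q (n - 1) + (m : ℝ) ^ (digit m ω (n - 1)) * q (n - 2)) :
    ∀ n, 1 ≤ n →
      |ω - p n / q n| ≤ (m : ℝ) ^ (∑ k ∈ Finset.Icc 1 n, digit m ω k) / (q n * q (n + 1)) ∧
      (m : ℝ) ^ (∑ k ∈ Finset.Icc 1 n, digit m ω k) / (q n * q (n + 1)) ≤ 1 / q n :=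
  abs_error_upper_bound_general m hm ω hω hω0 p q hp0 hq0 hp1 hq1 hp hq
end

section
/- Let m ≥ 2 be an integer and ω ∈ (0, m−1] irrational. With the m-adic continued fraction digits bₙ(ω), iterates τ_m^n(ω), and convergents ωₙ = pₙ/qₙ, one has |ω − ωₙ| ≥ m^{b₁+⋯+bₙ} / (qₙ·(qₙ₊₁ + (m−1)·m^{bₙ₊₁}·qₙ)) > 0 for all n ≥ 1. -/
open Finset

theorem Finset.prod_zpow_eq_zpow_sum {ι G₀ : Type*} [CommGroupWithZero G₀] {a : G₀} (ha : a ≠ 0)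
    (s : Finset ι) (f : ι → ℤ) : ∏ i ∈ s, a ^ f i = a ^ ∑ i ∈ s, f i := by
  induction s using Finset.cons_induction with
  | empty => simp
  | cons i s hi ih => rw [prod_cons, sum_cons, ih, zpow_add₀ ha]

section Tau

variable {m : ℕ}

theorem tau_eq_rpow_fract (x : ℝ) :
    tau m x = (m : ℝ) ^ Int.fract (Real.logb m x⁻¹) - 1 := by
  rw [← Int.self_sub_floor]
  rfl

theorem tau_nonneg (hm : 1 ≤ m) (x : ℝ) : 0 ≤ tau m x := by
  rw [tau_eq_rpow_fract, sub_nonneg]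
  exact Real.one_le_rpow (by exact_mod_cast hm) (Int.fract_nonneg _)

theorem tau_lt_sub_one (hm : 1 < m) (x : ℝ) : tau m x < (m : ℝ) - 1 := by
  rw [tau_eq_rpow_fract, sub_lt_sub_iff_right]
  simpa using Real.rpow_lt_rpow_of_exponent_lt (by exact_mod_cast hm) (Int.fract_lt_one _)

theorem tau_eq_inv_mul_zpow_sub_one (hm : 1 < m) {x : ℝ} (hx : 0 < x) :
    tau m x = x⁻¹ * ((m : ℝ) ^ b1 m x)⁻¹ - 1 := by
  have hm0 : (0 : ℝ) < m := by positivity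
  have hm1 : (m : ℝ) ≠ 1 := by exact_mod_cast hm.ne'
  rw [tau, Real.rpow_sub hm0, ← Real.logb, Real.rpow_logb hm0 hm1 (inv_pos.2 hx),
    Real.rpow_intCast, div_eq_mul_inv]

theorem mul_zpow_b1_mul_one_add_tau (hm : 1 < m) {x : ℝ} (hx : 0 < x) :
    x * ((m : ℝ) ^ b1 m x * (1 + tau m x)) = 1 := by
  have : (m : ℝ) ^ b1 m x ≠ 0 := zpow_ne_zero _ (by positivity)
  rw [tau_eq_inv_mul_zpow_sub_one hm hx]
  field_simp
  ring

theorem Irrational.tau (hm : 1 < m) {x : ℝ} (hx : Irrational x) (hx0 : 0 < x) :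
    Irrational (tau m x) := by
  have hq : ((m : ℚ) ^ b1 m x)⁻¹ ≠ 0 := inv_ne_zero (zpow_ne_zero _ (by positivity))
  rw [tau_eq_inv_mul_zpow_sub_one hm hx0]
  simpa using (hx.inv.mul_ratCast hq).sub_intCast 1

theorem mapsTo_tau (hm : 1 < m) :
    Set.MapsTo (tau m) {x | Irrational x ∧ 0 < x} {x | Irrational x ∧ 0 < x} := by
  rintro x ⟨hx, hx0⟩
  have hirr := hx.tau hm hx0
  exact ⟨hirr, (tau_nonneg hm.le x).lt_of_ne' hirr.ne_zero⟩

end Tau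

/-- `p` and `q` are the numerators and denominators of the convergents of the continued fraction
`1 / (a₁ + a₁ / (a₂ + a₂ / (a₃ + ⋯)))`. -/
structure IsContinuantPair (a p q : ℕ → ℝ) : Prop where
  p_zero : p 0 = 0
  q_zero : q 0 = 1
  p_one : p 1 = 1
  q_one : q 1 = a 1
  p_add_two : ∀ n, p (n + 2) = a (n + 2) * p (n + 1) + a (n + 1) * p n
  q_add_two : ∀ n, q (n + 2) = a (n + 2) * q (n + 1) + a (n + 1) * q n

namespace IsContinuantPair

variable {a p q : ℕ → ℝ}

theorem det (h : IsContinuantPair a p q) (n : ℕ) :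
    p n * q (n + 1) - p (n + 1) * q n = (-1) ^ (n + 1) * ∏ k ∈ Icc 1 n, a k := by
  induction n with
  | zero => simp [h.p_zero, h.q_zero, h.p_one]
  | succ n ih =>
    rw [h.p_add_two, h.q_add_two, prod_Icc_succ_top (by omega)]
    linear_combination -a (n + 1) * ih

theorem q_pos (h : IsContinuantPair a p q) (ha : ∀ n, 0 < a n) (n : ℕ) : 0 < q n := by
  induction n using Nat.twoStepInduction with
  | zero => simp [h.q_zero]
  | one => simpa [h.q_one] using ha 1
  | more n hn hn1 =>
    have := ha (n + 1)
    have := ha (n + 2)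
    rw [h.q_add_two]
    positivity

/-- `t₀` is the continued fraction truncated after `a_{n+1}` and completed by the tail `t_{n+1}`. -/
theorem tail_zero_mul_eq (h : IsContinuantPair a p q) {t : ℕ → ℝ}
    (ht : ∀ n, t n * (a (n + 1) * (1 + t (n + 1))) = 1) (n : ℕ) :
    t 0 * (q (n + 1) + t (n + 1) * a (n + 1) * q n) = p (n + 1) + t (n + 1) * a (n + 1) * p n := by
  induction n with
  | zero =>
    rw [h.p_zero, h.q_zero, h.p_one, h.q_one]
    linear_combination ht 0
  | succ n ih =>
    rw [h.q_add_two, h.p_add_two]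
    linear_combination a (n + 2) * (1 + t (n + 2)) * ih + (p n - t 0 * q n) * a (n + 1) * ht (n + 1)

theorem abs_sub_div_eq (h : IsContinuantPair a p q) (ha : ∀ n, 0 < a n) {t : ℕ → ℝ}
    (ht : ∀ n, t n * (a (n + 1) * (1 + t (n + 1))) = 1) (ht0 : ∀ n, 0 ≤ t n) (n : ℕ) :
    |t 0 - p n / q n| =
      (∏ k ∈ Icc 1 n, a k) / (q n * (q (n + 1) + t (n + 1) * a (n + 1) * q n)) := by
  have hq := h.q_pos ha
  have hD : 0 < q (n + 1) + t (n + 1) * a (n + 1) * q n := by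
    have := ht0 (n + 1)
    have := ha (n + 1)
    have := hq n
    have := hq (n + 1)
    positivity
  have hprod : 0 < ∏ k ∈ Icc 1 n, a k := prod_pos fun k _ => ha k
  have herr : t 0 - p n / q n =
      (-1) ^ n * (∏ k ∈ Icc 1 n, a k) / (q n * (q (n + 1) + t (n + 1) * a (n + 1) * q n)) := by
    rw [eq_div_iff (mul_pos (hq n) hD).ne', ← mul_assoc, sub_mul, div_mul_cancel₀ _ (hq n).ne']
    linear_combination q n * h.tail_zero_mul_eq ht n - h.det n
  rw [herr, abs_div, abs_mul, abs_pow, abs_neg, abs_one, one_pow, one_mul, abs_of_pos hprod,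
    abs_of_pos (mul_pos (hq n) hD)]

end IsContinuantPair

theorem abs_error_lower_bound_general (m : ℕ) (hm : 2 ≤ m) (ω : ℝ) (hω : Irrational ω) (hω0 : 0 < ω)
    (p q : ℕ → ℝ)
    (hp0 : p 0 = 0) (hq0 : q 0 = 1) (hp1 : p 1 = 1) (hq1 : q 1 = (m : ℝ) ^ (digit m ω 1))
    (hp : ∀ n, 2 ≤ n → p n = (m : ℝ) ^ (digit m ω n) * p (n - 1) + (m : ℝ) ^ (digit m ω (n - 1)) * p (n - 2))
    (hq : ∀ n, 2 ≤ n → q n = (m : ℝ) ^ (digit m ω n) * q (n - 1) + (m : ℝ) ^ (digit m ω (n - 1)) * q (n - 2)) :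
    ∀ n, 1 ≤ n →
      (m : ℝ) ^ (∑ k ∈ Finset.Icc 1 n, digit m ω k) /
          (q n * (q (n + 1) + ((m : ℝ) - 1) * (m : ℝ) ^ (digit m ω (n + 1)) * q n)) ≤
        |ω - p n / q n| ∧
      0 < (m : ℝ) ^ (∑ k ∈ Finset.Icc 1 n, digit m ω k) /
          (q n * (q (n + 1) + ((m : ℝ) - 1) * (m : ℝ) ^ (digit m ω (n + 1)) * q n)) := by
  have hm1 : 1 < m := hm
  have hM : (0 : ℝ) < m := by positivity
  have hM1 : (0 : ℝ) < m - 1 := by linarith [show (2 : ℝ) ≤ m by exact_mod_cast hm]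
  set t : ℕ → ℝ := fun n => (tau m)^[n] ω
  have htail : ∀ n, Irrational (t n) ∧ 0 < t n := fun n => (mapsTo_tau hm1).iterate n ⟨hω, hω0⟩
  have ht_succ : ∀ n, t (n + 1) = tau m (t n) := fun n => Function.iterate_succ_apply' _ _ _
  have ht : ∀ n, t n * ((m : ℝ) ^ digit m ω (n + 1) * (1 + t (n + 1))) = 1 := fun n => by
    rw [ht_succ]
    exact mul_zpow_b1_mul_one_add_tau hm1 (htail n).2
  have ha : ∀ n, 0 < (m : ℝ) ^ digit m ω n := fun n => zpow_pos hM _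
  have hcont : IsContinuantPair (fun n => (m : ℝ) ^ digit m ω n) p q :=
    ⟨hp0, hq0, hp1, hq1, fun n => hp (n + 2) (by omega), fun n => hq (n + 2) (by omega)⟩
  intro n _
  have herr : |ω - p n / q n| = _ := hcont.abs_sub_div_eq ha ht (fun n => (htail n).2.le) n
  rw [prod_zpow_eq_zpow_sum hM.ne'] at herr
  have := hcont.q_pos ha n
  have := hcont.q_pos ha (n + 1)
  have := ha (n + 1)
  refine ⟨?_, by positivity⟩
  have := tau_nonneg hm1.le (t n)
  rw [herr, ht_succ]
  gcongr
  exact (tau_lt_sub_one hm1 _).le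

theorem abs_error_lower_bound (m : ℕ) (hm : 2 ≤ m) (ω : ℝ) (hω : Irrational ω) (hω0 : 0 < ω) (hω1 : ω ≤ (m : ℝ) - 1)
    (p q : ℕ → ℝ)
    (hp0 : p 0 = 0) (hq0 : q 0 = 1) (hp1 : p 1 = 1) (hq1 : q 1 = (m : ℝ) ^ (digit m ω 1))
    (hp : ∀ n, 2 ≤ n → p n = (m : ℝ) ^ (digit m ω n) * p (n - 1) + (m : ℝ) ^ (digit m ω (n - 1)) * p (n - 2))
    (hq : ∀ n, 2 ≤ n → q n = (m : ℝ) ^ (digit m ω n) * q (n - 1) + (m : ℝ) ^ (digit m ω (n - 1)) * q (n - 2)) :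
    ∀ n, 1 ≤ n →
      (m : ℝ) ^ (∑ k ∈ Finset.Icc 1 n, digit m ω k) /
          (q n * (q (n + 1) + ((m : ℝ) - 1) * (m : ℝ) ^ (digit m ω (n + 1)) * q n)) ≤
        |ω - p n / q n| ∧
      0 < (m : ℝ) ^ (∑ k ∈ Finset.Icc 1 n, digit m ω k) /
          (q n * (q (n + 1) + ((m : ℝ) - 1) * (m : ℝ) ^ (digit m ω (n + 1)) * q n)) :=
  abs_error_lower_bound_general m hm ω hω hω0 p q hp0 hq0 hp1 hq1 hp hq
end
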